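/- Converse strong law for the outer capacity (Theorem 4(b)): Let {X_n; n ≥ 1} be a sequence of independent and identically distributed random variables in a sub-linear expectation space (Ω, ℋ, E), let V be the capacity generated by E and V* the associated outer capacity. Suppose V* is continuous and E is countably sub-additive. If V*( limsup_{n→∞} |S_n|/n = +∞ ) < 1, then C_V[|X_1|] < ∞. -/

import Mathlib

open scoped BigOperators ENNReal
open Filter

/-- The class `C_{l,Lip}(ℝ^n)` of local-Lipschitz test functions:
`|φ(x) − φ(y)| ≤ C (1 + |x|^m + |y|^m) |x − y|` for some `C > 0` and `m ∈ ℕ`. -/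
def CLLip {n : ℕ} (φ : (Fin n → ℝ) → ℝ) : Prop :=
  ∃ C > (0:ℝ), ∃ m : ℕ, ∀ x y : Fin n → ℝ,
    |φ x - φ y| ≤ C * (1 + ‖x‖ ^ m + ‖y‖ ^ m) * ‖x - y‖

/-- A sub-linear expectation space `(Ω, ℋ, E)`: `ℋ` is a set of real random variables
containing the constants and stable under composition with `C_{l,Lip}` functions, and
`E : ℋ → [-∞, ∞]` is monotone, constant preserving, sub-additive (whenever the right-hand
side is not of the form `∞ - ∞`) and positively homogeneous. -/
structure SLE (Ω : Type*) where
  H : Set (Ω → ℝ)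
  E : (Ω → ℝ) → EReal
  const_mem : ∀ c : ℝ, (fun _ => c) ∈ H
  comp_mem : ∀ {n : ℕ} (X : Fin n → Ω → ℝ) (φ : (Fin n → ℝ) → ℝ),
      (∀ i, X i ∈ H) → CLLip φ → (fun ω => φ (fun i => X i ω)) ∈ H
  mono : ∀ {X Y : Ω → ℝ}, X ∈ H → Y ∈ H → (∀ ω, X ω ≤ Y ω) → E X ≤ E Y
  const_eq : ∀ c : ℝ, E (fun _ => c) = (c : EReal)
  subadd : ∀ {X Y : Ω → ℝ}, X ∈ H → Y ∈ H →
      ¬(E X = ⊤ ∧ E Y = ⊥) → ¬(E X = ⊥ ∧ E Y = ⊤) →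
      E (fun ω => X ω + Y ω) ≤ E X + E Y
  homog : ∀ {X : Ω → ℝ}, X ∈ H → ∀ l : ℝ, 0 ≤ l →
      E (fun ω => l * X ω) = (l : EReal) * E X

/-- The canonical map from `[-∞,∞]` to `[0,∞]` (faithful on nonnegative values). -/
noncomputable def erealToENNReal (x : EReal) : ℝ≥0∞ :=
  if x = ⊤ then ⊤ else ENNReal.ofReal x.toReal

namespace SLE

variable {Ω : Type*}

/-- The conjugate (lower) expectation `ℰ[X] := -E[-X]`. -/
noncomputable def cE (S : SLE Ω) (X : Ω → ℝ) : EReal := - S.E (fun ω => - X ω)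

/-- `Y` (an `n`-dimensional random vector) is independent to `X` (an `m`-dimensional
random vector) under the sub-linear expectation `E`:
`E[φ(X,Y)] = E[ E[φ(x,Y)]|_{x=X} ]` for every `φ ∈ C_{l,Lip}(ℝ^m × ℝ^n)` such that
`φ̄(x) := E[|φ(x,Y)|] < ∞` for every `x` and `E[|φ̄(X)|] < ∞`. -/
def IndepTo (S : SLE Ω) {m n : ℕ} (X : Fin m → Ω → ℝ) (Y : Fin n → Ω → ℝ) : Prop :=
  ∀ φ : (Fin (m + n) → ℝ) → ℝ, CLLip φ →
    (∀ x : Fin m → ℝ, S.E (fun ω' => |φ (Fin.append x (fun i => Y i ω'))|) ≠ ⊤) →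
    S.E (fun ω =>
      |(S.E (fun ω' => |φ (Fin.append (fun i => X i ω) (fun i => Y i ω'))|)).toReal|) ≠ ⊤ →
    S.E (fun ω => φ (Fin.append (fun i => X i ω) (fun i => Y i ω))) =
      S.E (fun ω => (S.E (fun ω' => φ (Fin.append (fun i => X i ω) (fun i => Y i ω')))).toReal)

/-- `Y` (an `n`-dimensional random vector) is negatively dependent to `X`
(an `m`-dimensional random vector) under the sub-linear expectation `E`:
`E[φ₁(X) φ₂(Y)] ≤ E[φ₁(X)] E[φ₂(Y)]` for every pair of test functions
`φ₁ ∈ C_{l,Lip}(ℝ^m)`, `φ₂ ∈ C_{l,Lip}(ℝ^n)` which are both coordinatewise nondecreasing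
or both coordinatewise nonincreasing, with `φ₁(X) ≥ 0`, `E[φ₂(Y)] ≥ 0` and
`E[|φ₁(X) φ₂(Y)|], E[|φ₁(X)|], E[|φ₂(Y)|] < ∞`. -/
def NegDepTo (S : SLE Ω) {m n : ℕ} (X : Fin m → Ω → ℝ) (Y : Fin n → Ω → ℝ) : Prop :=
  ∀ (φ₁ : (Fin m → ℝ) → ℝ) (φ₂ : (Fin n → ℝ) → ℝ), CLLip φ₁ → CLLip φ₂ →
    ((Monotone φ₁ ∧ Monotone φ₂) ∨ (Antitone φ₁ ∧ Antitone φ₂)) →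
    (∀ ω, 0 ≤ φ₁ (fun i => X i ω)) →
    0 ≤ S.E (fun ω => φ₂ (fun i => Y i ω)) →
    S.E (fun ω => |φ₁ (fun i => X i ω) * φ₂ (fun i => Y i ω)|) ≠ ⊤ →
    S.E (fun ω => |φ₁ (fun i => X i ω)|) ≠ ⊤ →
    S.E (fun ω => |φ₂ (fun i => Y i ω)|) ≠ ⊤ →
    S.E (fun ω => φ₁ (fun i => X i ω) * φ₂ (fun i => Y i ω)) ≤
      S.E (fun ω => φ₁ (fun i => X i ω)) * S.E (fun ω => φ₂ (fun i => Y i ω))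

/-- The capacity generated by a sub-linear expectation:
`V(A) := inf{E[ξ] : I_A ≤ ξ, ξ ∈ ℋ}`. -/
noncomputable def V (S : SLE Ω) (A : Set Ω) : EReal :=
  sInf (S.E '' {ξ | ξ ∈ S.H ∧ ∀ ω, A.indicator (fun _ => (1:ℝ)) ω ≤ ξ ω})

/-- The outer capacity `V*(A) := inf{Σ_n V(A_n) : A ⊆ ⋃_n A_n}`. -/
noncomputable def Vstar (S : SLE Ω) (A : Set Ω) : EReal :=
  sInf {x : EReal | ∃ B : ℕ → Set Ω, A ⊆ ⋃ i, B i ∧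
    x = ((∑' i, erealToENNReal (S.V (B i)) : ℝ≥0∞) : EReal)}

/-- The Choquet integral
`C_V[X] := ∫_0^∞ V(X ≥ t) dt + ∫_{-∞}^0 (V(X ≥ t) − 1) dt`. -/
noncomputable def choquet (S : SLE Ω) (X : Ω → ℝ) : EReal :=
  ((∫⁻ t in Set.Ioi (0:ℝ), erealToENNReal (S.V {ω | t ≤ X ω}) : ℝ≥0∞) : EReal)
    - ((∫⁻ t in Set.Iio (0:ℝ), erealToENNReal (1 - S.V {ω | t ≤ X ω}) : ℝ≥0∞) : EReal)

/-- A sequence `{X_n ; n ≥ 1}` is identically distributed: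
`E[φ(X_i)] = E[φ(X_1)]` for all `i ≥ 1` and `φ ∈ C_{l,Lip}(ℝ)`. -/
def IdentDistrib (S : SLE Ω) (X : ℕ → Ω → ℝ) : Prop :=
  ∀ i : ℕ, 1 ≤ i → ∀ φ : (Fin 1 → ℝ) → ℝ, CLLip φ →
    S.E (fun ω => φ (fun _ => X i ω)) = S.E (fun ω => φ (fun _ => X 1 ω))

/-- A sequence `{X_n ; n ≥ 1}` is negatively dependent:
`X_{i+1}` is negatively dependent to `(X_1, …, X_i)` for every `i ≥ 1`. -/
def NegDepSeq (S : SLE Ω) (X : ℕ → Ω → ℝ) : Prop :=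
  ∀ i : ℕ, 1 ≤ i →
    S.NegDepTo (fun j : Fin i => X ((j : ℕ) + 1)) (fun _ : Fin 1 => X (i + 1))

/-- A sequence `{X_n ; n ≥ 1}` is independent:
`X_{i+1}` is independent to `(X_1, …, X_i)` for every `i ≥ 1`. -/
def IndepSeq (S : SLE Ω) (X : ℕ → Ω → ℝ) : Prop :=
  ∀ i : ℕ, 1 ≤ i →
    S.IndepTo (fun j : Fin i => X ((j : ℕ) + 1)) (fun _ : Fin 1 => X (i + 1))

end SLE


/-!
By continuity of `V*` from above, the hypothesis gives a level `N` with
`V*(|X_k| > N k for some k ≥ 1) < 1`. Smooth the events `{|X_k| > N k}` by the ramps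
`g_k = tailRamp (N k) ∘ X_k`. Independence computes `E[1 - ∏_{k ≤ m} (1 - g_k)]` as
`1 - ∏_{k ≤ m} (1 - E g_k)`, and countable subadditivity bounds it by that outer capacity, so
`∏ (1 - E g_k)` stays away from `0` and `∑ E g_k < ∞`. Since the `X_k` are identically
distributed, `E g_k` dominates `V(|X_1| ≥ (N + 1) k)`, and these capacities, summed, bound the
Choquet integral of `|X_1|`.
-/

open scoped NNReal
open MeasureTheory

lemma erealToENNReal_eq_toENNReal : erealToENNReal = EReal.toENNReal := rfl

lemma CLLip.of_lipschitzWith {n : ℕ} {K : ℝ≥0} {φ : (Fin n → ℝ) → ℝ}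
    (hφ : LipschitzWith K φ) : CLLip φ := by
  refine ⟨K + 1, by positivity, 0, fun x y => ?_⟩
  calc |φ x - φ y| = dist (φ x) (φ y) := (Real.dist_eq _ _).symm
    _ ≤ K * dist x y := hφ.dist_le_mul x y
    _ ≤ (K + 1) * (1 + ‖x‖ ^ 0 + ‖y‖ ^ 0) * ‖x - y‖ := by
      rw [dist_eq_norm]
      gcongr
      norm_num
      nlinarith [K.coe_nonneg]

def tailRamp (c t : ℝ) : ℝ := min 1 (max 0 (|t| - c))

lemma tailRamp_nonneg (c t : ℝ) : 0 ≤ tailRamp c t :=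
  le_min zero_le_one (le_max_left _ _)

lemma tailRamp_le_one (c t : ℝ) : tailRamp c t ≤ 1 := min_le_left _ _

lemma tailRamp_eq_one {c t : ℝ} (h : c + 1 ≤ |t|) : tailRamp c t = 1 :=
  min_eq_left (le_max_of_le_right (by linarith))

lemma tailRamp_eq_zero {c t : ℝ} (h : |t| ≤ c) : tailRamp c t = 0 := by
  rw [tailRamp, max_eq_left (by linarith), min_eq_right zero_le_one]

lemma lipschitzWith_tailRamp (c : ℝ) : LipschitzWith 1 (tailRamp c) := by
  have h : LipschitzWith 1 (fun t : ℝ => |t| - c) := by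
    simpa using (lipschitzWith_one_norm (E := ℝ)).sub (LipschitzWith.const c)
  exact (h.const_max 0).const_min 1

namespace SLE

variable {Ω : Type*} (S : SLE Ω)

lemma comp_mem_of_lipschitzWith {Z : Ω → ℝ} (hZ : Z ∈ S.H) {K : ℝ≥0} {ψ : ℝ → ℝ}
    (hψ : LipschitzWith K ψ) : (fun ω => ψ (Z ω)) ∈ S.H :=
  S.comp_mem (fun _ : Fin 1 => Z) (fun v => ψ (v 0)) (fun _ => hZ)
    (CLLip.of_lipschitzWith (hψ.comp (LipschitzWith.eval 0)))

lemma const_add_mem {Z : Ω → ℝ} (hZ : Z ∈ S.H) (c : ℝ) : (fun ω => c + Z ω) ∈ S.H :=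
  S.comp_mem_of_lipschitzWith hZ ((LipschitzWith.const c).add LipschitzWith.id)

lemma const_mul_mem {Z : Ω → ℝ} (hZ : Z ∈ S.H) (d : ℝ) : (fun ω => d * Z ω) ∈ S.H :=
  S.comp_mem_of_lipschitzWith hZ (lipschitzWith_smul d)

lemma E_le_of_le_const {Z : Ω → ℝ} (hZ : Z ∈ S.H) {b : ℝ} (h : ∀ ω, Z ω ≤ b) :
    S.E Z ≤ b :=
  S.const_eq b ▸ S.mono hZ (S.const_mem b) h

lemma le_E_of_const_le {Z : Ω → ℝ} (hZ : Z ∈ S.H) {a : ℝ} (h : ∀ ω, a ≤ Z ω) :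
    (a : EReal) ≤ S.E Z :=
  S.const_eq a ▸ S.mono (S.const_mem a) hZ h

lemma coe_toReal_E {Z : Ω → ℝ} (hZ : Z ∈ S.H) {a b : ℝ} (ha : ∀ ω, a ≤ Z ω)
    (hb : ∀ ω, Z ω ≤ b) : ((S.E Z).toReal : EReal) = S.E Z :=
  EReal.coe_toReal (ne_top_of_le_ne_top (EReal.coe_ne_top b) (S.E_le_of_le_const hZ hb))
    (ne_bot_of_le_ne_bot (EReal.coe_ne_bot a) (S.le_E_of_const_le hZ ha))

lemma toReal_E_mem_Icc {Z : Ω → ℝ} (hZ : Z ∈ S.H) {a b : ℝ} (ha : ∀ ω, a ≤ Z ω)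
    (hb : ∀ ω, Z ω ≤ b) : (S.E Z).toReal ∈ Set.Icc a b := by
  have h := S.coe_toReal_E hZ ha hb
  exact ⟨EReal.coe_le_coe_iff.1 (h ▸ S.le_E_of_const_le hZ ha),
    EReal.coe_le_coe_iff.1 (h ▸ S.E_le_of_le_const hZ hb)⟩

lemma E_const_add {Y : Ω → ℝ} (hY : Y ∈ S.H) (c : ℝ) :
    S.E (fun ω => c + Y ω) = c + S.E Y := by
  have hc : S.E (fun _ => c) = c := S.const_eq c
  have hc' : S.E (fun _ => -c) = (-c : ℝ) := S.const_eq (-c)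
  apply le_antisymm
  · simpa [hc] using S.subadd (S.const_mem c) hY (by simp [hc]) (by simp [hc])
  · have h := S.subadd (S.const_add_mem hY c) (S.const_mem (-c)) (by simp [hc']) (by simp [hc'])
    simp only [add_neg_cancel_comm, hc'] at h
    rw [EReal.coe_neg, ← sub_eq_add_neg] at h
    calc (c : EReal) + S.E Y ≤ c + (S.E (fun ω => c + Y ω) - c) := add_le_add_right h _
      _ = S.E (fun ω => c + Y ω) := by rw [add_comm, EReal.sub_add_cancel]

lemma E_affine {Z : Ω → ℝ} (hZ : Z ∈ S.H) (c : ℝ) {d : ℝ} (hd : 0 ≤ d) :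
    S.E (fun ω => c + d * Z ω) = c + d * S.E Z := by
  rw [S.E_const_add (S.const_mul_mem hZ d), S.homog hZ d hd]

lemma V_le_E {A : Set Ω} {ξ : Ω → ℝ} (hξ : ξ ∈ S.H)
    (h : ∀ ω, A.indicator (fun _ => (1:ℝ)) ω ≤ ξ ω) : S.V A ≤ S.E ξ :=
  sInf_le ⟨ξ, ⟨hξ, h⟩, rfl⟩

lemma V_mono {A B : Set Ω} (h : A ⊆ B) : S.V A ≤ S.V B :=
  sInf_le_sInf fun _ ⟨ξ, ⟨hξ, hB⟩, hx⟩ =>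
    ⟨ξ, ⟨hξ, fun ω => (Set.indicator_le_indicator_of_subset h (fun _ => zero_le_one) ω).trans
      (hB ω)⟩, hx⟩

lemma V_nonneg (A : Set Ω) : 0 ≤ S.V A :=
  le_sInf fun _ ⟨_, ⟨hξ, hA⟩, hx⟩ => hx ▸ S.le_E_of_const_le hξ fun ω =>
    (Set.indicator_nonneg (fun _ _ => zero_le_one) ω).trans (hA ω)

lemma V_le_one (A : Set Ω) : S.V A ≤ 1 :=
  (S.V_le_E (S.const_mem 1) fun ω => Set.indicator_le_self' (fun _ _ => zero_le_one) ω).trans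
    (S.const_eq 1).le

lemma one_le_V_univ : 1 ≤ S.V Set.univ :=
  le_sInf fun _ ⟨ξ, ⟨hξ, h⟩, hx⟩ => hx ▸ S.le_E_of_const_le hξ fun ω => by simpa using h ω

lemma Vstar_mono {A B : Set Ω} (h : A ⊆ B) : S.Vstar A ≤ S.Vstar B :=
  sInf_le_sInf fun _ ⟨C, hC, hx⟩ => ⟨C, h.trans hC, hx⟩

def CountablySubadditive : Prop :=
  ∀ (X₀ : Ω → ℝ) (Y : ℕ → Ω → ℝ), X₀ ∈ S.H → (∀ i, Y i ∈ S.H) →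
    (∀ ω, 0 ≤ X₀ ω) → (∀ i ω, 0 ≤ Y i ω) →
    (∀ ω, ENNReal.ofReal (X₀ ω) ≤ ∑' i, ENNReal.ofReal (Y i ω)) →
    S.E X₀ ≤ ((∑' i, (S.E (Y i)).toENNReal : ℝ≥0∞) : EReal)

lemma exists_E_le_V_add (A : Set Ω) {ε : ℝ≥0} (hε : 0 < ε) :
    ∃ ξ ∈ S.H, (∀ ω, A.indicator (fun _ => (1:ℝ)) ω ≤ ξ ω) ∧
      (S.E ξ).toENNReal ≤ (S.V A).toENNReal + ε := by
  have hV : S.V A < S.V A + (ε : ℝ) := by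
    have hne_top : S.V A ≠ ⊤ := ne_top_of_le_ne_top (by decide) (S.V_le_one A)
    have hne_bot : S.V A ≠ ⊥ := ne_bot_of_le_ne_bot (by simp) (S.V_nonneg A)
    rw [← EReal.coe_toReal hne_top hne_bot, ← EReal.coe_add, EReal.coe_lt_coe_iff]
    exact lt_add_of_pos_right _ hε
  obtain ⟨_, ⟨ξ, ⟨hξ, hA⟩, rfl⟩, hlt⟩ := sInf_lt_iff.1 hV
  refine ⟨ξ, hξ, hA, ?_⟩
  calc (S.E ξ).toENNReal ≤ (S.V A + (ε : ℝ)).toENNReal := EReal.toENNReal_le_toENNReal hlt.le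
    _ = (S.V A).toENNReal + ε := by
      rw [EReal.toENNReal_add (S.V_nonneg A) (by exact_mod_cast ε.2)]
      simp

lemma E_le_Vstar (hsub : S.CountablySubadditive) {U : Set Ω} {W : Ω → ℝ} (hW : W ∈ S.H)
    (hW0 : ∀ ω, 0 ≤ W ω) (hWU : ∀ ω, W ω ≤ U.indicator (fun _ => (1:ℝ)) ω) :
    S.E W ≤ S.Vstar U := by
  refine le_sInf fun _ ⟨B, hB, hx⟩ => hx ▸ ?_
  rw [erealToENNReal_eq_toENNReal, ← EReal.coe_toENNReal (S.le_E_of_const_le hW hW0),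
    EReal.coe_ennreal_le_coe_ennreal_iff]
  refine ENNReal.le_of_forall_pos_le_add fun ε hε _ => ?_
  obtain ⟨ε', hε'0, hε'⟩ := ENNReal.exists_pos_sum_of_countable (ENNReal.coe_ne_zero.2 hε.ne') ℕ
  choose ξ hξH hξB hξE using fun i => S.exists_E_le_V_add (B i) (hε'0 i)
  have hξ0 : ∀ i ω, 0 ≤ ξ i ω := fun i ω =>
    (Set.indicator_nonneg (fun _ _ => zero_le_one) ω).trans (hξB i ω)
  have hcover : ∀ ω, ENNReal.ofReal (W ω) ≤ ∑' i, ENNReal.ofReal (ξ i ω) := by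
    intro ω
    by_cases hω : ω ∈ U
    · obtain ⟨i, hi⟩ := Set.mem_iUnion.1 (hB hω)
      refine le_trans (ENNReal.ofReal_le_ofReal ?_) (ENNReal.le_tsum i)
      have hWω := hWU ω
      have hξω := hξB i ω
      rw [Set.indicator_of_mem hω] at hWω
      rw [Set.indicator_of_mem hi] at hξω
      exact hWω.trans hξω
    · have hWω := hWU ω
      rw [Set.indicator_of_notMem hω] at hWω
      simp [ENNReal.ofReal_of_nonpos hWω]
  calc (S.E W).toENNReal ≤ ∑' i, (S.E (ξ i)).toENNReal := by
        simpa using EReal.toENNReal_le_toENNReal (hsub W ξ hW hξH hW0 hξ0 hcover)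
    _ ≤ ∑' i, ((S.V (B i)).toENNReal + ε' i) := ENNReal.tsum_le_tsum hξE
    _ = ∑' i, (S.V (B i)).toENNReal + ∑' i, (ε' i : ℝ≥0∞) := ENNReal.tsum_add
    _ ≤ ∑' i, (S.V (B i)).toENNReal + ε := add_le_add_right hε'.le _

lemma E_convex_comb {Z : Ω → ℝ} (hZ : Z ∈ S.H) (hZ0 : ∀ ω, 0 ≤ Z ω) (hZ1 : ∀ ω, Z ω ≤ 1)
    {a : ℝ} (ha : a ≤ 1) :
    S.E (fun ω => a + (1 - a) * Z ω) = ((a + (1 - a) * (S.E Z).toReal : ℝ) : EReal) := by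
  rw [S.E_affine hZ a (sub_nonneg.2 ha), ← S.coe_toReal_E hZ hZ0 hZ1]
  norm_cast

end SLE

/-- `noisyOr h m x = 1 - ∏_{k=1}^m (1 - h k (x_k))`: the chance that at least one of `m`
independent events of probabilities `h k (x_k)` occurs. -/
def noisyOr (h : ℕ → ℝ → ℝ) : (m : ℕ) → (Fin m → ℝ) → ℝ
  | 0, _ => 0
  | m + 1, x =>
    noisyOr h m (Fin.init x) + (1 - noisyOr h m (Fin.init x)) * h (m + 1) (x (Fin.last m))

section noisyOr

variable {h : ℕ → ℝ → ℝ}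

lemma noisyOr_succ_append {m : ℕ} (x : Fin m → ℝ) (y : Fin 1 → ℝ) :
    noisyOr h (m + 1) (Fin.append x y) = noisyOr h m x + (1 - noisyOr h m x) * h (m + 1) (y 0) := by
  simp only [noisyOr, Fin.append_right_eq_snoc, Fin.init_snoc, Fin.snoc_last]

lemma noisyOr_mem_Icc (h01 : ∀ k t, h k t ∈ Set.Icc (0 : ℝ) 1) :
    ∀ (m : ℕ) (x : Fin m → ℝ), noisyOr h m x ∈ Set.Icc (0 : ℝ) 1
  | 0, _ => by simp [noisyOr]
  | m + 1, x => by
    obtain ⟨ha0, ha1⟩ := noisyOr_mem_Icc h01 m (Fin.init x)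
    obtain ⟨hs0, hs1⟩ := h01 (m + 1) (x (Fin.last m))
    constructor <;> simp only [noisyOr] <;> nlinarith

lemma noisyOr_eq_zero :
    ∀ {m : ℕ} {x : Fin m → ℝ}, (∀ j : Fin m, h (j + 1) (x j) = 0) → noisyOr h m x = 0
  | 0, _, _ => rfl
  | m + 1, x, hx => by
    have hinit : noisyOr h m (Fin.init x) = 0 := noisyOr_eq_zero fun j => hx j.castSucc
    have hlast : h (m + 1) (x (Fin.last m)) = 0 := by simpa using hx (Fin.last m)
    simp [noisyOr, hinit, hlast]

lemma lipschitzWith_noisyOr (h01 : ∀ k t, h k t ∈ Set.Icc (0 : ℝ) 1) {K : ℝ≥0}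
    (hK : ∀ k, LipschitzWith K (h k)) : ∀ m : ℕ, LipschitzWith (m * K) (noisyOr h m)
  | 0 => by simp [noisyOr]
  | m + 1 => by
    refine LipschitzWith.of_dist_le_mul fun z w => ?_
    set a := noisyOr h m (Fin.init z)
    set b := noisyOr h m (Fin.init w)
    set s := h (m + 1) (z (Fin.last m))
    set t := h (m + 1) (w (Fin.last m))
    have hab : |a - b| ≤ m * K * dist z w := by
      rw [← Real.dist_eq]
      refine ((lipschitzWith_noisyOr h01 hK m).dist_le_mul _ _).trans ?_
      push_cast
      exact mul_le_mul_of_nonneg_left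
        ((dist_pi_le_iff dist_nonneg).2 fun j => dist_le_pi_dist z w j.castSucc) (by positivity)
    have hst : |s - t| ≤ K * dist z w := by
      rw [← Real.dist_eq]
      exact ((hK (m + 1)).dist_le_mul _ _).trans (by gcongr; exact dist_le_pi_dist z w _)
    obtain ⟨hb0, hb1⟩ := noisyOr_mem_Icc h01 m (Fin.init w)
    obtain ⟨hs0, hs1⟩ := h01 (m + 1) (z (Fin.last m))
    calc dist (noisyOr h (m + 1) z) (noisyOr h (m + 1) w)
        = |(a - b) * (1 - s) + (s - t) * (1 - b)| := by
          show |(a + (1 - a) * s) - (b + (1 - b) * t)| = _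
          congr 1; ring
      _ ≤ |a - b| + |s - t| := by
          refine (abs_add_le _ _).trans ?_
          rw [abs_mul, abs_mul, abs_of_nonneg (sub_nonneg.2 hs1), abs_of_nonneg (sub_nonneg.2 hb1)]
          gcongr <;> nlinarith [abs_nonneg (a - b), abs_nonneg (s - t)]
      _ ≤ ((m + 1 : ℕ) * K : ℝ≥0) * dist z w := by
          push_cast; nlinarith [dist_nonneg (x := z) (y := w)]

end noisyOr

namespace SLE

variable {Ω : Type*} (S : SLE Ω) {X : ℕ → Ω → ℝ} {h : ℕ → ℝ → ℝ}

lemma noisyOr_comp_mem (hX : ∀ i, 1 ≤ i → X i ∈ S.H)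
    (h01 : ∀ k t, h k t ∈ Set.Icc (0 : ℝ) 1) {K : ℝ≥0} (hK : ∀ k, LipschitzWith K (h k))
    (m : ℕ) : (fun ω => noisyOr h m (fun j : Fin m => X (j + 1) ω)) ∈ S.H :=
  S.comp_mem _ _ (fun _ => hX _ (Nat.le_add_left 1 _))
    (CLLip.of_lipschitzWith (lipschitzWith_noisyOr h01 hK m))

lemma E_noisyOr_succ (hX : ∀ i, 1 ≤ i → X i ∈ S.H) (hind : S.IndepSeq X)
    (h01 : ∀ k t, h k t ∈ Set.Icc (0 : ℝ) 1) {K : ℝ≥0} (hK : ∀ k, LipschitzWith K (h k))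
    (m : ℕ) :
    S.E (fun ω => noisyOr h (m + 1) (fun j : Fin (m + 1) => X (j + 1) ω)) =
      let e := (S.E fun ω => h (m + 1) (X (m + 1) ω)).toReal
      ((e + (1 - e) * (S.E fun ω => noisyOr h m (fun j : Fin m => X (j + 1) ω)).toReal : ℝ) :
        EReal) := by
  dsimp only
  set e := (S.E fun ω => h (m + 1) (X (m + 1) ω)).toReal
  have hZ : (fun ω => h (m + 1) (X (m + 1) ω)) ∈ S.H :=
    S.comp_mem_of_lipschitzWith (hX _ (Nat.le_add_left 1 m)) (hK _)
  have he : e ∈ Set.Icc (0 : ℝ) 1 :=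
    S.toReal_E_mem_Icc hZ (fun _ => (h01 _ _).1) (fun _ => (h01 _ _).2)
  have hW01 : ∀ ω, noisyOr h m (fun j : Fin m => X (j + 1) ω) ∈ Set.Icc (0 : ℝ) 1 :=
    fun _ => noisyOr_mem_Icc h01 m _
  have hcomb : ∀ a : ℝ, a + (1 - a) * e = e + (1 - e) * a := fun a => by ring
  have hinner : ∀ x : Fin m → ℝ,
      S.E (fun ω' => noisyOr h (m + 1) (Fin.append x fun _ => X (m + 1) ω')) =
        ((e + (1 - e) * noisyOr h m x : ℝ) : EReal) := fun x => by
    simp only [noisyOr_succ_append, ← hcomb]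
    exact S.E_convex_comb hZ (fun _ => (h01 _ _).1) (fun _ => (h01 _ _).2)
      (noisyOr_mem_Icc h01 m x).2
  have hW : S.E (fun ω => e + (1 - e) * noisyOr h m (fun j : Fin m => X (j + 1) ω)) = _ :=
    S.E_convex_comb (S.noisyOr_comp_mem hX h01 hK m) (fun ω => (hW01 ω).1)
      (fun ω => (hW01 ω).2) he.2
  have happend : ∀ ω, (fun j : Fin (m + 1) => X (j + 1) ω) =
      Fin.append (fun j : Fin m => X (j + 1) ω) (fun _ => X (m + 1) ω) := fun ω => by
    rw [Fin.append_right_eq_snoc]; exact (Fin.snoc_init_self _).symm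
  simp only [happend]
  rcases Nat.eq_zero_or_pos m with rfl | hm
  · have hnil : ∀ ω, (fun j : Fin 0 => X (j + 1) ω) = Fin.elim0 := fun _ => Subsingleton.elim _ _
    simp only [hnil, hinner]
    simp [noisyOr, S.const_eq]
  have habs : ∀ v, |noisyOr h (m + 1) v| = noisyOr h (m + 1) v :=
    fun v => abs_of_nonneg (noisyOr_mem_Icc h01 _ v).1
  have habs' : ∀ ω, |e + (1 - e) * noisyOr h m (fun j : Fin m => X (j + 1) ω)| =
      e + (1 - e) * noisyOr h m (fun j : Fin m => X (j + 1) ω) := fun ω =>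
    abs_of_nonneg (add_nonneg he.1 (mul_nonneg (sub_nonneg.2 he.2) (hW01 ω).1))
  rw [hind m hm _ (CLLip.of_lipschitzWith (lipschitzWith_noisyOr h01 hK (m + 1)))
    (fun x => by simp only [habs, hinner]; exact EReal.coe_ne_top _)
    (by simp only [habs, hinner, EReal.toReal_coe, habs', hW]; exact EReal.coe_ne_top _)]
  simp only [hinner, EReal.toReal_coe, hW]

lemma E_noisyOr (hX : ∀ i, 1 ≤ i → X i ∈ S.H) (hind : S.IndepSeq X)
    (h01 : ∀ k t, h k t ∈ Set.Icc (0 : ℝ) 1) {K : ℝ≥0} (hK : ∀ k, LipschitzWith K (h k)) :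
    ∀ m : ℕ, S.E (fun ω => noisyOr h m (fun j : Fin m => X (j + 1) ω)) =
      ((1 - ∏ k ∈ Finset.range m, (1 - (S.E fun ω => h (k + 1) (X (k + 1) ω)).toReal) : ℝ) :
        EReal)
  | 0 => by simp [noisyOr, S.const_eq]
  | m + 1 => by
    rw [S.E_noisyOr_succ hX hind h01 hK]
    dsimp only
    rw [E_noisyOr hX hind h01 hK m, EReal.toReal_coe, Finset.prod_range_succ]
    congr 1
    ring

end SLE

lemma exists_abs_le_mul_of_limsup_ne_top {x : ℕ → ℝ}
    (hx : limsup (fun n : ℕ => ((|∑ k ∈ Finset.Icc 1 n, x k| / n : ℝ) : EReal)) atTop ≠ ⊤) :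
    ∃ C : ℝ, ∀ k, 1 ≤ k → |x k| ≤ C * k := by
  obtain ⟨C₀, hC₀, -⟩ := EReal.lt_iff_exists_real_btwn.1 (lt_top_iff_ne_top.2 hx)
  obtain ⟨N₀, hN₀⟩ := eventually_atTop.1 (eventually_lt_of_limsup_lt hC₀)
  have hS : ∀ n, N₀ ≤ n → |∑ k ∈ Finset.Icc 1 n, x k| ≤ C₀ * n := by
    intro n hn
    rcases Nat.eq_zero_or_pos n with rfl | hn0
    · simp
    · exact ((div_lt_iff₀ (Nat.cast_pos.2 hn0)).1 (EReal.coe_lt_coe_iff.1 (hN₀ n hn))).le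
  refine ⟨2 * |C₀| + ∑ j ∈ Finset.range (N₀ + 1), |x j|, fun k hk => ?_⟩
  have hk1 : (1 : ℝ) ≤ k := Nat.one_le_cast.2 hk
  have hsum0 : 0 ≤ ∑ j ∈ Finset.range (N₀ + 1), |x j| := Finset.sum_nonneg fun _ _ => abs_nonneg _
  by_cases hkN : k ≤ N₀
  · have := Finset.single_le_sum (fun j _ => abs_nonneg (x j))
      (Finset.mem_range.2 (Nat.lt_succ_of_le hkN))
    nlinarith [abs_nonneg C₀]
  · obtain ⟨j, rfl⟩ : ∃ j, k = j + 1 := ⟨k - 1, by omega⟩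
    have hxk : x (j + 1) = ∑ k ∈ Finset.Icc 1 (j + 1), x k - ∑ k ∈ Finset.Icc 1 j, x k := by
      rw [Finset.sum_Icc_succ_top (by omega)]; ring
    have h1 := hS (j + 1) (by omega)
    have h2 := hS j (by omega)
    have h3 := abs_sub (∑ k ∈ Finset.Icc 1 (j + 1), x k) (∑ k ∈ Finset.Icc 1 j, x k)
    push_cast at h1 hk1 ⊢
    rw [hxk]
    nlinarith [le_abs_self C₀, neg_abs_le C₀]

lemma Real.sum_le_neg_log_of_le_prod_one_sub {ι : Type*} {s : Finset ι} {a : ι → ℝ} {ε : ℝ}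
    (hε : 0 < ε) (ha : ∀ i ∈ s, a i ≤ 1) (hprod : ε ≤ ∏ i ∈ s, (1 - a i)) :
    ∑ i ∈ s, a i ≤ -Real.log ε := by
  have hexp : ∏ i ∈ s, (1 - a i) ≤ Real.exp (-∑ i ∈ s, a i) := by
    rw [← Finset.sum_neg_distrib, Real.exp_sum]
    exact Finset.prod_le_prod (fun i hi => sub_nonneg.2 (ha i hi))
      fun i _ => by linarith [Real.add_one_le_exp (-a i)]
  have := Real.log_le_log hε (hprod.trans hexp)
  rw [Real.log_exp] at this
  linarith

lemma lintegral_Ioi_le_tsum_of_antitone {f : ℝ → ℝ≥0∞} (hf : Antitone f) {c : ℝ} (hc : 0 < c) :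
    ∫⁻ t in Set.Ioi 0, f t ≤ ENNReal.ofReal c * ∑' k : ℕ, f (c * k) := by
  have hcover : Set.Ioi (0 : ℝ) ⊆ ⋃ k : ℕ, Set.Ico (c * k) (c * (k + 1)) := fun t ht =>
    Set.mem_iUnion.2 ⟨⌊t / c⌋₊, (le_div_iff₀' hc).1 (Nat.floor_le (div_pos ht hc).le),
      (div_lt_iff₀' hc).1 (Nat.lt_floor_add_one _)⟩
  calc ∫⁻ t in Set.Ioi 0, f t
      ≤ ∫⁻ t in ⋃ k : ℕ, Set.Ico (c * k) (c * (k + 1)), f t := lintegral_mono_set hcover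
    _ ≤ ∑' k : ℕ, ∫⁻ t in Set.Ico (c * k) (c * (k + 1)), f t := lintegral_iUnion_le _ _
    _ ≤ ∑' k : ℕ, ∫⁻ _ in Set.Ico (c * k) (c * (k + 1)), f (c * k) :=
      ENNReal.tsum_le_tsum fun k => setLIntegral_mono measurable_const fun t ht => hf ht.1
    _ = ENNReal.ofReal c * ∑' k : ℕ, f (c * k) := by
      rw [← ENNReal.tsum_mul_left]
      congr 1
      funext k
      rw [setLIntegral_const, Real.volume_Ico, mul_comm]
      congr 2
      ring

namespace SLE

variable {Ω : Type*} (S : SLE Ω)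

lemma exists_Vstar_lt_one {X : ℕ → Ω → ℝ}
    (hVabove : ∀ A : ℕ → Set Ω, Antitone A → S.Vstar (⋂ i, A i) = ⨅ i, S.Vstar (A i))
    (hlt : S.Vstar {ω | limsup
        (fun n : ℕ => ((|∑ k ∈ Finset.Icc 1 n, X k ω| / n : ℝ) : EReal)) atTop = ⊤} < 1) :
    ∃ N : ℕ, S.Vstar {ω | ∃ k, 1 ≤ k ∧ (N : ℝ) * k < |X k ω|} < 1 := by
  set D : ℕ → Set Ω := fun N => {ω | ∃ k, 1 ≤ k ∧ (N : ℝ) * k < |X k ω|}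
  have hD : Antitone D := fun M N hMN ω ⟨k, hk, hω⟩ =>
    ⟨k, hk, lt_of_le_of_lt (by gcongr) hω⟩
  have hsub : ⋂ N, D N ⊆ {ω | limsup
      (fun n : ℕ => ((|∑ k ∈ Finset.Icc 1 n, X k ω| / n : ℝ) : EReal)) atTop = ⊤} := by
    intro ω hω
    by_contra hne
    obtain ⟨C, hC⟩ := exists_abs_le_mul_of_limsup_ne_top hne
    obtain ⟨k, hk, hXk⟩ := Set.mem_iInter.1 hω ⌈C⌉₊
    have : C * k ≤ ⌈C⌉₊ * k := by gcongr; exact Nat.le_ceil C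
    linarith [hC k hk]
  have : ⨅ N, S.Vstar (D N) < 1 := hVabove D hD ▸ (S.Vstar_mono hsub).trans_lt hlt
  exact iInf_lt_iff.1 this

lemma V_le_E_tailRamp {Z : Ω → ℝ} (hZ : Z ∈ S.H) (c : ℝ) :
    S.V {ω | c + 1 ≤ |Z ω|} ≤ S.E (fun ω => tailRamp c (Z ω)) := by
  refine S.V_le_E (S.comp_mem_of_lipschitzWith hZ (lipschitzWith_tailRamp c)) fun ω => ?_
  by_cases hω : c + 1 ≤ |Z ω|
  · simp [Set.indicator_of_mem (show ω ∈ {ω | c + 1 ≤ |Z ω|} from hω), tailRamp_eq_one hω]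
  · rw [Set.indicator_of_notMem (show ω ∉ {ω | c + 1 ≤ |Z ω|} from hω)]
    exact tailRamp_nonneg c (Z ω)

lemma choquet_eq_lintegral_of_nonneg {Z : Ω → ℝ} (hZ : ∀ ω, 0 ≤ Z ω) :
    S.choquet Z = ((∫⁻ t in Set.Ioi 0, (S.V {ω | t ≤ Z ω}).toENNReal : ℝ≥0∞) : EReal) := by
  have hneg : ∫⁻ t in Set.Iio 0, (1 - S.V {ω | t ≤ Z ω}).toENNReal = 0 := by
    rw [← lintegral_zero (μ := volume.restrict (Set.Iio (0 : ℝ)))]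
    refine setLIntegral_congr_fun measurableSet_Iio fun t ht => ?_
    have huniv : {ω | t ≤ Z ω} = Set.univ :=
      Set.eq_univ_of_forall fun ω => (le_of_lt ht).trans (hZ ω)
    rw [huniv]
    exact EReal.toENNReal_of_nonpos (EReal.sub_nonpos.2 S.one_le_V_univ)
  rw [choquet, erealToENNReal_eq_toENNReal, hneg, EReal.coe_ennreal_zero, sub_zero]

lemma E_comp_eq_of_identDistrib {X : ℕ → Ω → ℝ} (hid : S.IdentDistrib X) {i : ℕ} (hi : 1 ≤ i)
    {K : ℝ≥0} {ψ : ℝ → ℝ} (hψ : LipschitzWith K ψ) :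
    S.E (fun ω => ψ (X i ω)) = S.E (fun ω => ψ (X 1 ω)) :=
  hid i hi _ (CLLip.of_lipschitzWith (hψ.comp (LipschitzWith.eval 0)))

lemma one_sub_prod_E_tailRamp_le_Vstar {X : ℕ → Ω → ℝ} (hX : ∀ i, 1 ≤ i → X i ∈ S.H)
    (hind : S.IndepSeq X) (hsub : S.CountablySubadditive) (N m : ℕ) :
    ((1 - ∏ k ∈ Finset.range m,
        (1 - (S.E fun ω => tailRamp (N * (k + 1 : ℕ)) (X (k + 1) ω)).toReal) : ℝ) : EReal) ≤
      S.Vstar {ω | ∃ k, 1 ≤ k ∧ (N : ℝ) * k < |X k ω|} := by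
  set h : ℕ → ℝ → ℝ := fun k => tailRamp (N * k)
  have h01 : ∀ k t, h k t ∈ Set.Icc (0 : ℝ) 1 := fun k t =>
    ⟨tailRamp_nonneg _ _, tailRamp_le_one _ _⟩
  have hK : ∀ k, LipschitzWith 1 (h k) := fun k => lipschitzWith_tailRamp _
  have hWD : ∀ ω, noisyOr h m (fun j : Fin m => X (j + 1) ω) ≤
      {ω | ∃ k, 1 ≤ k ∧ (N : ℝ) * k < |X k ω|}.indicator (fun _ => (1 : ℝ)) ω := by
    intro ω
    by_cases hω : ω ∈ {ω | ∃ k, 1 ≤ k ∧ (N : ℝ) * k < |X k ω|}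
    · rw [Set.indicator_of_mem hω]
      exact (noisyOr_mem_Icc h01 m _).2
    · rw [Set.indicator_of_notMem hω, noisyOr_eq_zero]
      simp only [Set.mem_ofPred_eq, not_exists, not_and, not_lt] at hω
      exact fun j => tailRamp_eq_zero (hω _ (Nat.le_add_left 1 j))
  exact (S.E_noisyOr hX hind h01 hK m).symm.le.trans (S.E_le_Vstar hsub
    (S.noisyOr_comp_mem hX h01 hK m) (fun ω => (noisyOr_mem_Icc h01 m _).1) hWD)

lemma tsum_E_tailRamp_ne_top {X : ℕ → Ω → ℝ} (hX : ∀ i, 1 ≤ i → X i ∈ S.H)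
    (hind : S.IndepSeq X) (hsub : S.CountablySubadditive) {N : ℕ}
    (hN : S.Vstar {ω | ∃ k, 1 ≤ k ∧ (N : ℝ) * k < |X k ω|} < 1) :
    ∑' k : ℕ, (S.E fun ω => tailRamp (N * (k + 1 : ℕ)) (X (k + 1) ω)).toENNReal ≠ ⊤ := by
  have hZ : ∀ k : ℕ, (fun ω => tailRamp (N * (k + 1 : ℕ)) (X (k + 1) ω)) ∈ S.H := fun k =>
    S.comp_mem_of_lipschitzWith (hX _ (Nat.le_add_left 1 k)) (lipschitzWith_tailRamp _)
  set e : ℕ → ℝ := fun k => (S.E fun ω => tailRamp (N * (k + 1 : ℕ)) (X (k + 1) ω)).toReal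
  have he : ∀ k, e k ∈ Set.Icc (0 : ℝ) 1 := fun k =>
    S.toReal_E_mem_Icc (hZ k) (fun _ => tailRamp_nonneg _ _) (fun _ => tailRamp_le_one _ _)
  have hE : ∀ k, (S.E fun ω => tailRamp (N * (k + 1 : ℕ)) (X (k + 1) ω)).toENNReal =
      ENNReal.ofReal (e k) := fun k => EReal.toENNReal_of_ne_top
    ((S.E_le_of_le_const (hZ k) fun _ => tailRamp_le_one _ _).trans_lt (EReal.coe_lt_top 1)).ne
  obtain ⟨δ, hVδ, hδ1⟩ := EReal.lt_iff_exists_real_btwn.1 hN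
  replace hδ1 : δ < 1 := EReal.coe_lt_coe_iff.1 hδ1
  have hsum : ∀ m, ∑ k ∈ Finset.range m, ENNReal.ofReal (e k) ≤
      ENNReal.ofReal (-Real.log (1 - δ)) := fun m => by
    have hprod := EReal.coe_lt_coe_iff.1
      ((S.one_sub_prod_E_tailRamp_le_Vstar hX hind hsub N m).trans_lt hVδ)
    rw [← ENNReal.ofReal_sum_of_nonneg fun k _ => (he k).1]
    exact ENNReal.ofReal_le_ofReal (Real.sum_le_neg_log_of_le_prod_one_sub (by linarith)
      (fun k _ => (he k).2) (by linarith))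
  simp only [hE]
  exact ne_top_of_le_ne_top ENNReal.ofReal_ne_top (ENNReal.tsum_le_of_sum_range_le hsum)

lemma choquet_abs_lt_top {Z : Ω → ℝ} (hZ : Z ∈ S.H) (N : ℕ)
    (hsum : ∑' k : ℕ, (S.E (fun ω => tailRamp (N * (k + 1 : ℕ)) (Z ω))).toENNReal ≠ ⊤) :
    S.choquet (fun ω => |Z ω|) < ⊤ := by
  have hf : Antitone fun t : ℝ => (S.V {ω | t ≤ |Z ω|}).toENNReal := fun s t hst =>
    EReal.toENNReal_le_toENNReal (S.V_mono fun ω hω => hst.trans hω)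
  have hf0 : ∀ t, (S.V {ω | t ≤ |Z ω|}).toENNReal ≠ ⊤ := fun t =>
    EReal.toENNReal_ne_top_iff.2 (ne_top_of_le_ne_top (by decide) (S.V_le_one _))
  have htail : ∀ k : ℕ, (S.V {ω | (N + 1 : ℝ) * (k + 1 : ℕ) ≤ |Z ω|}).toENNReal ≤
      (S.E (fun ω => tailRamp (N * (k + 1 : ℕ)) (Z ω))).toENNReal := fun k => by
    refine EReal.toENNReal_le_toENNReal ((S.V_mono fun ω hω => ?_).trans (S.V_le_E_tailRamp hZ _))
    have : (N : ℝ) * (k + 1 : ℕ) + 1 ≤ (N + 1 : ℝ) * (k + 1 : ℕ) := by push_cast; nlinarith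
    exact this.trans hω
  rw [S.choquet_eq_lintegral_of_nonneg fun ω => abs_nonneg (Z ω), lt_top_iff_ne_top, Ne,
    EReal.coe_ennreal_eq_top_iff, ← Ne]
  refine ne_top_of_le_ne_top ?_ (lintegral_Ioi_le_tsum_of_antitone hf (c := N + 1) (by positivity))
  refine ENNReal.mul_ne_top ENNReal.ofReal_ne_top ?_
  rw [tsum_eq_zero_add' ENNReal.summable]
  exact ENNReal.add_ne_top.2 ⟨hf0 _, ne_top_of_le_ne_top hsum (ENNReal.tsum_le_tsum fun k => by
    simpa using htail k)⟩

end SLE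

theorem slln_converse_outer_capacity_general {Ω : Type*} (S : SLE Ω) (X : ℕ → Ω → ℝ)
    (hH : ∀ i, 1 ≤ i → X i ∈ S.H)
    (hid : S.IdentDistrib X)
    (hind : S.IndepSeq X)
    (hVabove : ∀ A : ℕ → Set Ω, Antitone A → S.Vstar (⋂ i, A i) = ⨅ i, S.Vstar (A i))
    (hEsub : ∀ (X₀ : Ω → ℝ) (Y : ℕ → Ω → ℝ), X₀ ∈ S.H → (∀ i, Y i ∈ S.H) →
      (∀ ω, 0 ≤ X₀ ω) → (∀ i ω, 0 ≤ Y i ω) →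
      (∀ ω, ENNReal.ofReal (X₀ ω) ≤ ∑' i, ENNReal.ofReal (Y i ω)) →
      S.E X₀ ≤ ((∑' i, erealToENNReal (S.E (Y i)) : ℝ≥0∞) : EReal))
    (hlt : S.Vstar {ω | Filter.limsup
        (fun n : ℕ => ((|∑ k ∈ Finset.Icc 1 n, X k ω| / n : ℝ) : EReal)) atTop = ⊤} < 1) :
    S.choquet (fun ω => |X 1 ω|) < ⊤ := by
  obtain ⟨N, hN⟩ := S.exists_Vstar_lt_one hVabove hlt
  refine S.choquet_abs_lt_top (hH 1 le_rfl) N ?_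
  convert S.tsum_E_tailRamp_ne_top hH hind hEsub hN using 4 with k
  exact (S.E_comp_eq_of_identDistrib hid (Nat.le_add_left 1 k) (lipschitzWith_tailRamp _)).symm

/-- **Converse strong law for the outer capacity (Theorem 4(b)).**
Let `{X_n ; n ≥ 1}` be independent and identically distributed random variables, `V` the
capacity generated by `E` and `V*` the associated outer capacity. Suppose `V*` is
continuous and `E` is countably sub-additive. If `V*(limsup |S_n|/n = +∞) < 1`, then
`C_V[|X_1|] < ∞`. -/
theorem slln_converse_outer_capacity {Ω : Type*} (S : SLE Ω) (X : ℕ → Ω → ℝ)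
    (hH : ∀ i, 1 ≤ i → X i ∈ S.H)
    (hid : S.IdentDistrib X)
    (hind : S.IndepSeq X)
    (hVbelow : ∀ A : ℕ → Set Ω, Monotone A → S.Vstar (⋃ i, A i) = ⨆ i, S.Vstar (A i))
    (hVabove : ∀ A : ℕ → Set Ω, Antitone A → S.Vstar (⋂ i, A i) = ⨅ i, S.Vstar (A i))
    (hEsub : ∀ (X₀ : Ω → ℝ) (Y : ℕ → Ω → ℝ), X₀ ∈ S.H → (∀ i, Y i ∈ S.H) →
      (∀ ω, 0 ≤ X₀ ω) → (∀ i ω, 0 ≤ Y i ω) →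
      (∀ ω, ENNReal.ofReal (X₀ ω) ≤ ∑' i, ENNReal.ofReal (Y i ω)) →
      S.E X₀ ≤ ((∑' i, erealToENNReal (S.E (Y i)) : ℝ≥0∞) : EReal))
    (hlt : S.Vstar {ω | Filter.limsup
        (fun n : ℕ => ((|∑ k ∈ Finset.Icc 1 n, X k ω| / n : ℝ) : EReal)) atTop = ⊤} < 1) :
    S.choquet (fun ω => |X 1 ω|) < ⊤ :=
  slln_converse_outer_capacity_general S X hH hid hind hVabove hEsub hlt
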